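/- Let 0 < s < 1, N ≥ 1, and m(x) = min(1, N^{1-s} x^{s-1}) for x > 0. Suppose k₁,…,k₆ ∈ ℝ satisfy |k₁ + k₂| ≤ A, |k₃ + k₄| ≤ A, and |k₅|, |k₆| ≤ A, where A ≤ max(|k₁|,…,|k₆|) =: N₁*. Then |m(k₁)²k₁² − m(k₂)²k₂² + m(k₃)²k₃² − m(k₄)²k₄² + m(k₅)²k₅² − m(k₆)²k₆²| ≤ C · m(N₁*)·N₁* · m(A)·A for an absolute constant C. -/

import Mathlib

/-!
Writing `c = N ^ (1 - s)`, one has `m(x) |x| = g |x|` for `g x = truncPow c s x = min x (c x ^ s)`,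
so every term of the sum is `g(|k|)²`. On `[0, ∞)` the function `g` is a minimum of concave
functions vanishing at `0`, hence monotone and subadditive, so `|g a - g b| ≤ g |a - b|`. For a pair
with `|k + k'| ≤ A` this gives `|g(|k|)² - g(|k'|)²| = |g |k| - g |k'|| (g |k| + g |k'|) ≤ 2 g(A) g(N₁*)`,
and the two unpaired terms are at most `g(A) g(N₁*)` each.
-/

open Set

theorem ConcaveOn.map_add_le {f : ℝ → ℝ} (hf : ConcaveOn ℝ (Ici 0) f) (h0 : 0 ≤ f 0)
    {a b : ℝ} (ha : 0 ≤ a) (hb : 0 ≤ b) : f (a + b) ≤ f a + f b := by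
  rcases (add_nonneg ha hb).eq_or_lt with hab | hab
  · obtain ⟨rfl, rfl⟩ : a = 0 ∧ b = 0 := ⟨by linarith, by linarith⟩
    simpa using h0
  -- `t ∈ [0, a + b]` is a convex combination of `0` and `a + b`
  have key : ∀ t, 0 ≤ t → t ≤ a + b → t / (a + b) * f (a + b) ≤ f t := by
    intro t ht hta
    have hw : 0 ≤ 1 - t / (a + b) := by rw [sub_nonneg, div_le_one hab]; exact hta
    have := hf.2 (mem_Ici.2 le_rfl) (mem_Ici.2 hab.le) hw (by positivity : 0 ≤ t / (a + b))
      (by ring)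
    simp only [smul_eq_mul, mul_zero, zero_add, div_mul_cancel₀ t hab.ne'] at this
    nlinarith [mul_nonneg hw h0]
  have hsplit : f (a + b) = a / (a + b) * f (a + b) + b / (a + b) * f (a + b) := by
    rw [← add_mul, ← add_div, div_self hab.ne', one_mul]
  linarith [key a ha (by linarith), key b hb (by linarith)]

section Subadditive

variable {f : ℝ → ℝ}

theorem abs_map_sub_map_le (hmono : MonotoneOn f (Ici 0))
    (hsub : ∀ a b, 0 ≤ a → 0 ≤ b → f (a + b) ≤ f a + f b) {x y : ℝ} (hx : 0 ≤ x) (hy : 0 ≤ y) :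
    |f x - f y| ≤ f |x - y| := by
  wlog hyx : y ≤ x generalizing x y
  · rw [abs_sub_comm, abs_sub_comm x]
    exact this hy hx (le_of_not_ge hyx)
  have hxy : f x ≤ f y + f (x - y) := by
    simpa using hsub y (x - y) hy (sub_nonneg.2 hyx)
  rw [abs_of_nonneg (sub_nonneg.2 hyx), abs_of_nonneg (sub_nonneg.2 (hmono hy hx hyx))]
  linarith

theorem map_nonneg_of_subadditive (hmono : MonotoneOn f (Ici 0))
    (hsub : ∀ a b, 0 ≤ a → 0 ≤ b → f (a + b) ≤ f a + f b) {x : ℝ} (hx : 0 ≤ x) : 0 ≤ f x := by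
  have h0 : 0 ≤ f 0 := by simpa using hsub 0 0 le_rfl le_rfl
  exact h0.trans (hmono self_mem_Ici hx hx)

theorem abs_sq_map_abs_sub_sq_map_abs_le (hmono : MonotoneOn f (Ici 0))
    (hsub : ∀ a b, 0 ≤ a → 0 ≤ b → f (a + b) ≤ f a + f b) {x y A N : ℝ}
    (hxy : |x + y| ≤ A) (hx : |x| ≤ N) (hy : |y| ≤ N) :
    |f |x| ^ 2 - f |y| ^ 2| ≤ 2 * (f N * f A) := by
  have hdiff : abs (f |x| - f |y|) ≤ f A := by
    have hxy' : abs (|x| - |y|) ≤ A := by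
      simpa [abs_neg] using (abs_abs_sub_abs_le_abs_sub x (-y)).trans (by simpa using hxy)
    exact (abs_map_sub_map_le hmono hsub (abs_nonneg x) (abs_nonneg y)).trans
      (hmono (abs_nonneg (|x| - |y|)) ((abs_nonneg _).trans hxy') hxy')
  have hfx := map_nonneg_of_subadditive hmono hsub (abs_nonneg x)
  have hfy := map_nonneg_of_subadditive hmono hsub (abs_nonneg y)
  have hsum : abs (f |x| + f |y|) ≤ 2 * f N := by
    rw [abs_of_nonneg (add_nonneg hfx hfy)]
    linarith [hmono (abs_nonneg x) ((abs_nonneg x).trans hx) hx,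
      hmono (abs_nonneg y) ((abs_nonneg y).trans hy) hy]
  calc |f |x| ^ 2 - f |y| ^ 2| = abs (f |x| - f |y|) * abs (f |x| + f |y|) := by
        rw [← abs_mul]; congr 1; ring
    _ ≤ f A * (2 * f N) := mul_le_mul hdiff hsum (abs_nonneg _) ((abs_nonneg _).trans hdiff)
    _ = 2 * (f N * f A) := by ring

theorem sq_map_abs_le (hmono : MonotoneOn f (Ici 0))
    (hsub : ∀ a b, 0 ≤ a → 0 ≤ b → f (a + b) ≤ f a + f b) {x A N : ℝ}
    (hxA : |x| ≤ A) (hxN : |x| ≤ N) : f |x| ^ 2 ≤ f N * f A := by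
  have hfx := map_nonneg_of_subadditive hmono hsub (abs_nonneg x)
  have hfxN : f |x| ≤ f N := hmono (abs_nonneg x) ((abs_nonneg x).trans hxN) hxN
  have hfxA : f |x| ≤ f A := hmono (abs_nonneg x) ((abs_nonneg x).trans hxA) hxA
  rw [sq]
  exact mul_le_mul hfxN hfxA hfx (hfx.trans hfxN)

theorem abs_alternating_sum_sq_map_abs_le (hmono : MonotoneOn f (Ici 0))
    (hsub : ∀ a b, 0 ≤ a → 0 ≤ b → f (a + b) ≤ f a + f b) {k₁ k₂ k₃ k₄ k₅ k₆ A N : ℝ}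
    (h₁₂ : |k₁ + k₂| ≤ A) (h₃₄ : |k₃ + k₄| ≤ A) (h₅ : |k₅| ≤ A) (h₆ : |k₆| ≤ A)
    (hk₁ : |k₁| ≤ N) (hk₂ : |k₂| ≤ N) (hk₃ : |k₃| ≤ N) (hk₄ : |k₄| ≤ N) (hk₅ : |k₅| ≤ N)
    (hk₆ : |k₆| ≤ N) :
    |f |k₁| ^ 2 - f |k₂| ^ 2 + f |k₃| ^ 2 - f |k₄| ^ 2 + f |k₅| ^ 2 - f |k₆| ^ 2|
      ≤ 6 * (f N * f A) := by
  have b₁₂ := abs_sq_map_abs_sub_sq_map_abs_le hmono hsub h₁₂ hk₁ hk₂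
  have b₃₄ := abs_sq_map_abs_sub_sq_map_abs_le hmono hsub h₃₄ hk₃ hk₄
  have b₅ := sq_map_abs_le hmono hsub h₅ hk₅
  have b₆ := sq_map_abs_le hmono hsub h₆ hk₆
  rw [abs_le] at b₁₂ b₃₄ ⊢
  constructor <;> nlinarith [sq_nonneg (f |k₅|), sq_nonneg (f |k₆|)]

end Subadditive

noncomputable def truncPow (c s x : ℝ) : ℝ := min x (c * x ^ s)

section TruncPow

variable {c s : ℝ}

theorem concaveOn_truncPow (hc : 0 ≤ c) (hs₀ : 0 ≤ s) (hs₁ : s ≤ 1) :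
    ConcaveOn ℝ (Ici 0) (truncPow c s) :=
  (concaveOn_id (convex_Ici 0)).inf ((Real.concaveOn_rpow hs₀ hs₁).smul hc)

theorem monotoneOn_truncPow (hc : 0 ≤ c) (hs : 0 ≤ s) : MonotoneOn (truncPow c s) (Ici 0) :=
  fun _ hx _ _ hxy => min_le_min hxy
    (mul_le_mul_of_nonneg_left (Real.rpow_le_rpow hx hxy hs) hc)

theorem truncPow_zero (hc : 0 ≤ c) : truncPow c s 0 = 0 :=
  min_eq_left (mul_nonneg hc (Real.rpow_nonneg le_rfl s))

theorem truncPow_add_le (hc : 0 ≤ c) (hs₀ : 0 ≤ s) (hs₁ : s ≤ 1) (a b : ℝ) (ha : 0 ≤ a)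
    (hb : 0 ≤ b) : truncPow c s (a + b) ≤ truncPow c s a + truncPow c s b :=
  (concaveOn_truncPow hc hs₀ hs₁).map_add_le (truncPow_zero hc).ge ha hb

theorem ite_min_mul_abs_eq_truncPow (hc : 0 ≤ c) (x : ℝ) :
    (if x = 0 then 1 else min 1 (c * |x| ^ (s - 1))) * |x| = truncPow c s |x| := by
  rcases eq_or_ne x 0 with rfl | hx
  · simp [truncPow_zero hc]
  · have hx' : 0 < |x| := abs_pos.2 hx
    rw [if_neg hx, min_mul_of_nonneg _ _ hx'.le, one_mul, mul_assoc,
      ← Real.rpow_add_one hx'.ne', sub_add_cancel, truncPow]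

end TruncPow

/-- Six-term multiplier bound: if `|k₁+k₂| ≤ A`, `|k₃+k₄| ≤ A`, `|k₅|,|k₆| ≤ A` with
`A ≤ N₁* := max_j |k_j|`, then the alternating sum of `m(k_j)²k_j²` is bounded by
`C·m(N₁*)N₁*·m(A)A`. -/
theorem stmt9 :
    ∃ C : ℝ, 0 < C ∧ ∀ (N s : ℝ), 1 ≤ N → 0 < s → s < 1 →
      ∀ k₁ k₂ k₃ k₄ k₅ k₆ A : ℝ,
        |k₁ + k₂| ≤ A → |k₃ + k₄| ≤ A → |k₅| ≤ A → |k₆| ≤ A →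
        A ≤ max |k₁| (max |k₂| (max |k₃| (max |k₄| (max |k₅| |k₆|)))) →
        (let m : ℝ → ℝ := fun x => if x = 0 then 1 else min 1 (N ^ (1 - s) * |x| ^ (s - 1))
         let N₁ := max |k₁| (max |k₂| (max |k₃| (max |k₄| (max |k₅| |k₆|))))
        |m k₁ ^ 2 * k₁ ^ 2 - m k₂ ^ 2 * k₂ ^ 2 + m k₃ ^ 2 * k₃ ^ 2 - m k₄ ^ 2 * k₄ ^ 2 +
            m k₅ ^ 2 * k₅ ^ 2 - m k₆ ^ 2 * k₆ ^ 2|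
          ≤ C * (m N₁ * N₁) * (m A * A)) := by
  refine ⟨6, by norm_num, fun N s hN hs₀ hs₁ k₁ k₂ k₃ k₄ k₅ k₆ A h₁₂ h₃₄ h₅ h₆ hA => ?_⟩
  intro m N₁
  have hc : 0 ≤ N ^ (1 - s) := Real.rpow_nonneg (by linarith) _
  have hm : ∀ x, m x * |x| = truncPow (N ^ (1 - s)) s |x| := ite_min_mul_abs_eq_truncPow hc
  have hm_sq : ∀ x, m x ^ 2 * x ^ 2 = truncPow (N ^ (1 - s)) s |x| ^ 2 := fun x => by
    rw [← hm, mul_pow, sq_abs]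
  have hm_of_nonneg : ∀ x, 0 ≤ x → m x * x = truncPow (N ^ (1 - s)) s x := fun x hx => by
    simpa only [abs_of_nonneg hx] using hm x
  have hA₀ : 0 ≤ A := (abs_nonneg _).trans h₅
  rw [hm_sq, hm_sq, hm_sq, hm_sq, hm_sq, hm_sq, mul_assoc, hm_of_nonneg A hA₀,
    hm_of_nonneg N₁ (hA₀.trans hA)]
  exact abs_alternating_sum_sq_map_abs_le (monotoneOn_truncPow hc hs₀.le)
    (truncPow_add_le hc hs₀.le hs₁.le) h₁₂ h₃₄ h₅ h₆
    (by simp [N₁]) (by simp [N₁]) (by simp [N₁]) (by simp [N₁]) (by simp [N₁]) (by simp [N₁])
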